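/- arXiv:1905.05334 — 5 statements merged into one kernel-verified Lean document; each statement's English description precedes it below -/
import Mathlib

section
/- Let n ≥ 1, B : Fin n → ℝ and Q : Fin n → Fin n → ℝ, and set c = Σ_i |B_i| + Σ_{i<j} |Q_{ij}|. For v, h ∈ {0,1}^n define E₀(v,h) = Σ_i B_i v_i + Σ_{i<j} Q_{ij} v_i h_j and the penalty C(v,h) = −2c·|{i : v_i ≠ h_i}| (which equals −2c times the number of mismatched coordinates). Then the maximum of E₀(v,h) + C(v,h) over all (v,h) ∈ {0,1}^n × {0,1}^n equals the maximum of the original QUBO objective x ↦ Σ_i B_i x_i + Σ_{i<j} Q_{ij} x_i x_j over x ∈ {0,1}^n, and this maximum is attained at some pair with v = h. -/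
open Finset

/-- The real value of a binary (`{0,1}`) variable. -/
noncomputable def bval (b : Bool) : ℝ := if b then 1 else 0

/-- The QUBO objective `Σ_i B_i x_i + Σ_{i<j} Q_{ij} x_i x_j`. -/
noncomputable def quboObj {n : ℕ} (B : Fin n → ℝ) (Q : Fin n → Fin n → ℝ)
    (x : Fin n → Bool) : ℝ :=
  ∑ i, B i * bval (x i) +
    ∑ i, ∑ j ∈ Finset.univ.filter (fun j => i < j), Q i j * bval (x i) * bval (x j)

/-- The bipartite objective `E₀(v,h) = Σ_i B_i v_i + Σ_{i<j} Q_{ij} v_i h_j`. -/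
noncomputable def bipartiteObj {n : ℕ} (B : Fin n → ℝ) (Q : Fin n → Fin n → ℝ)
    (v h : Fin n → Bool) : ℝ :=
  ∑ i, B i * bval (v i) +
    ∑ i, ∑ j ∈ Finset.univ.filter (fun j => i < j), Q i j * bval (v i) * bval (h j)

/-- The penalty `C(v,h) = -2c·|{i : v_i ≠ h_i}|`. -/
noncomputable def penaltyFn {n : ℕ} (c : ℝ) (v h : Fin n → Bool) : ℝ :=
  -2 * c * ((Finset.univ.filter (fun i => v i ≠ h i)).card : ℝ)

lemma bval_nonneg (b : Bool) : 0 ≤ bval b := by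
  cases b <;> simp [bval]

lemma bval_le_one (b : Bool) : bval b ≤ 1 := by
  cases b <;> simp [bval]

lemma bipartiteObj_le {n : ℕ} (B : Fin n → ℝ) (Q : Fin n → Fin n → ℝ)
    (v h : Fin n → Bool) :
    bipartiteObj B Q v h ≤ ∑ i, |B i| +
      ∑ i, ∑ j ∈ Finset.univ.filter (fun j => i < j), |Q i j| := by
  unfold bipartiteObj
  gcongr with i _ i _ j _
  · calc B i * bval (v i) ≤ |B i| * bval (v i) := by
          exact mul_le_mul_of_nonneg_right (le_abs_self _) (bval_nonneg _)
      _ ≤ |B i| * 1 := by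
          exact mul_le_mul_of_nonneg_left (bval_le_one _) (abs_nonneg _)
      _ = |B i| := mul_one _
  · calc Q i j * bval (v i) * bval (h j)
        ≤ |Q i j| * bval (v i) * bval (h j) := by
          apply mul_le_mul_of_nonneg_right _ (bval_nonneg _)
          exact mul_le_mul_of_nonneg_right (le_abs_self _) (bval_nonneg _)
      _ ≤ |Q i j| * 1 * 1 := by
          refine mul_le_mul ?_ (bval_le_one _) (bval_nonneg _) (by positivity)
          exact mul_le_mul_of_nonneg_left (bval_le_one _) (abs_nonneg _)
      _ = |Q i j| := by ring

lemma penalty_self {n : ℕ} (c : ℝ) (x : Fin n → Bool) : penaltyFn c x x = 0 := by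
  simp [penaltyFn]

theorem bipartite_penalty_max (n : ℕ) (hn : 1 ≤ n)
    (B : Fin n → ℝ) (Q : Fin n → Fin n → ℝ) (c : ℝ)
    (hc : c = ∑ i, |B i| +
        ∑ i, ∑ j ∈ Finset.univ.filter (fun j => i < j), |Q i j|) :
    ∃ x : Fin n → Bool,
      -- the maximum of `E₀ + C` over all pairs `(v,h)` is attained at the pair `(x,x)`
      IsGreatest
        (Set.range (fun p : (Fin n → Bool) × (Fin n → Bool) =>
          bipartiteObj B Q p.1 p.2 + penaltyFn c p.1 p.2))
        (bipartiteObj B Q x x + penaltyFn c x x) ∧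
      -- and this common value is also the maximum of the original QUBO objective
      IsGreatest (Set.range (quboObj B Q))
        (bipartiteObj B Q x x + penaltyFn c x x) := by
  have hc0 : 0 ≤ c := by
    rw [hc]
    positivity
  obtain ⟨x, hx⟩ := Finite.exists_max (quboObj B Q)
  have hdiag : ∀ y : Fin n → Bool, bipartiteObj B Q y y = quboObj B Q y := fun y => rfl
  have hval : bipartiteObj B Q x x + penaltyFn c x x = quboObj B Q x := by
    rw [penalty_self, hdiag, add_zero]
  have hx0 : 0 ≤ quboObj B Q x := by
    have := hx (fun _ => false)
    simpa [quboObj, bval] using this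
  refine ⟨x, ⟨⟨(x, x), rfl⟩, ?_⟩, ⟨⟨x, hval.symm⟩, ?_⟩⟩
  · rintro y ⟨⟨v, h⟩, rfl⟩
    rw [hval]
    by_cases hvh : v = h
    · subst hvh
      simpa [penalty_self, hdiag] using hx v
    · have hcard : 1 ≤ ((Finset.univ.filter (fun i => v i ≠ h i)).card : ℝ) := by
        have : (Finset.univ.filter (fun i => v i ≠ h i)).Nonempty := by
          obtain ⟨i, hi⟩ := Function.ne_iff.mp hvh
          exact ⟨i, by simp [hi]⟩
        exact_mod_cast Finset.card_pos.mpr this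
      have hpen : penaltyFn c v h ≤ -2 * c := by
        unfold penaltyFn
        nlinarith
      have hE : bipartiteObj B Q v h ≤ c := hc ▸ bipartiteObj_le B Q v h
      simp only
      linarith
  · rintro y ⟨z, rfl⟩
    rw [hval]
    exact hx z
end

section
/- Let W : [n]×[m] → ℝ be a weight matrix with RBM energy E_W(v,h) = −Σ_{i,j} W_{ij} v_i h_j. Then the all-ones configuration is a ground state (i.e., E_W(v,h) ≥ E_W(1,…,1) = −Σ_{i,j} W_{ij} for all (v,h) ∈ {−1,1}^n × {−1,1}^m) if and only if the positive-sum condition holds: for every pair of subsets I ⊆ [n] and J ⊆ [m], the sum of W_{ij} over the switching subset (I × Jᶜ) ∪ (Iᶜ × J) is nonnegative. -/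
open Finset

/-- The RBM energy of an unbiased RBM with weight matrix `W`. -/
noncomputable def rbmEnergy {n m : ℕ} (W : Fin n → Fin m → ℝ)
    (v : Fin n → ℝ) (h : Fin m → ℝ) : ℝ :=
  -(∑ i, ∑ j, W i j * v i * h j)

lemma rbm_key {n m : ℕ} (W : Fin n → Fin m → ℝ) (I : Finset (Fin n)) (J : Finset (Fin m)) :
    ∑ i, ∑ j, W i j * (if i ∈ I then (-1 : ℝ) else 1) * (if j ∈ J then (-1 : ℝ) else 1)
      = (∑ i, ∑ j, W i j) - 2 * ∑ p ∈ (I ×ˢ Jᶜ) ∪ (Iᶜ ×ˢ J), W p.1 p.2 := by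
  have hS : ∑ p ∈ (I ×ˢ Jᶜ) ∪ (Iᶜ ×ˢ J), W p.1 p.2
      = ∑ p ∈ (Finset.univ : Finset (Fin n × Fin m)),
          (if (p.1 ∈ I ∧ p.2 ∉ J) ∨ (p.1 ∉ I ∧ p.2 ∈ J) then W p.1 p.2 else 0) := by
    rw [← Finset.sum_filter]
    congr 1
    ext p
    simp [Finset.mem_union, Finset.mem_product, and_comm]
  rw [hS, ← Finset.sum_product']
  rw [show ∑ i, ∑ j, W i j = ∑ p ∈ (Finset.univ ×ˢ Finset.univ : Finset (Fin n × Fin m)),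
      W p.1 p.2 from (Finset.sum_product univ univ (fun p => W p.1 p.2)).symm]
  have huniv : (Finset.univ ×ˢ Finset.univ : Finset (Fin n × Fin m)) = Finset.univ := by
    simp
  rw [huniv, Finset.mul_sum, ← Finset.sum_sub_distrib]
  apply Finset.sum_congr rfl
  intro p _
  by_cases hi : p.1 ∈ I <;> by_cases hj : p.2 ∈ J <;> simp [hi, hj] <;> ring

theorem gauged_iff_positive_sum (n m : ℕ) (W : Fin n → Fin m → ℝ) :
    rbmEnergy W (fun _ => 1) (fun _ => 1) = -(∑ i, ∑ j, W i j) ∧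
    ((∀ (v : Fin n → ℝ) (h : Fin m → ℝ),
        (∀ i, v i = 1 ∨ v i = -1) → (∀ j, h j = 1 ∨ h j = -1) →
        rbmEnergy W v h ≥ rbmEnergy W (fun _ => 1) (fun _ => 1)) ↔
      (∀ (I : Finset (Fin n)) (J : Finset (Fin m)),
        0 ≤ ∑ p ∈ (I ×ˢ Jᶜ) ∪ (Iᶜ ×ˢ J), W p.1 p.2)) := by
  constructor
  · simp [rbmEnergy]
  constructor
  · intro H I J
    have hv : ∀ i, (if i ∈ I then (-1 : ℝ) else 1) = 1 ∨ (if i ∈ I then (-1 : ℝ) else 1) = -1 := by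
      intro i; by_cases hi : i ∈ I <;> simp [hi]
    have hh : ∀ j, (if j ∈ J then (-1 : ℝ) else 1) = 1 ∨ (if j ∈ J then (-1 : ℝ) else 1) = -1 := by
      intro j; by_cases hj : j ∈ J <;> simp [hj]
    have := H (fun i => if i ∈ I then (-1 : ℝ) else 1) (fun j => if j ∈ J then (-1 : ℝ) else 1)
      hv hh
    simp only [rbmEnergy, ge_iff_le, neg_le_neg_iff, mul_one] at this
    rw [rbm_key W I J] at this
    linarith
  · intro H v h hv hh
    set I : Finset (Fin n) := Finset.univ.filter (fun i => v i = -1) with hI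
    set J : Finset (Fin m) := Finset.univ.filter (fun j => h j = -1) with hJ
    have hveq : ∀ i, v i = if i ∈ I then (-1 : ℝ) else 1 := by
      intro i
      rcases hv i with h1 | h1
      · have : i ∉ I := by simp [hI, h1]; norm_num
        simp [this, h1]
      · have : i ∈ I := by simp [hI, h1]
        simp [this, h1]
    have hheq : ∀ j, h j = if j ∈ J then (-1 : ℝ) else 1 := by
      intro j
      rcases hh j with h1 | h1
      · have : j ∉ J := by simp [hJ, h1]; norm_num
        simp [this, h1]
      · have : j ∈ J := by simp [hJ, h1]
        simp [this, h1]
    have hsum : ∑ i, ∑ j, W i j * v i * h j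
        = ∑ i, ∑ j, W i j * (if i ∈ I then (-1 : ℝ) else 1) * (if j ∈ J then (-1 : ℝ) else 1) := by
      apply Finset.sum_congr rfl; intro i _
      apply Finset.sum_congr rfl; intro j _
      rw [hveq i, hheq j]
    have hpos := H I J
    simp only [rbmEnergy, ge_iff_le, neg_le_neg_iff, mul_one]
    rw [hsum, rbm_key W I J]
    linarith
end

section
/- Let m ≥ 1 and let W : [2]×[m] → ℝ be a 2×m weight matrix such that the all-ones configuration is a ground state of the RBM energy, i.e., −Σ_{i,j} W_{ij} v_i h_j ≥ −Σ_{i,j} W_{ij} for all v ∈ {−1,1}², h ∈ {−1,1}^m. Then the frustration index of W is at most 1/4; explicitly, 4·Σ_{(i,j): W_{ij}<0} |W_{ij}| ≤ Σ_{i,j} |W_{ij}|. -/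
open Finset

theorem frustration_le_quarter_of_two_by_m (m : ℕ) (hm : 1 ≤ m)
    (W : Fin 2 → Fin m → ℝ)
    (hgauged : ∀ (v : Fin 2 → ℝ) (h : Fin m → ℝ),
      (∀ i, v i = 1 ∨ v i = -1) → (∀ j, h j = 1 ∨ h j = -1) →
      rbmEnergy W v h ≥ rbmEnergy W (fun _ => 1) (fun _ => 1)) :
    4 * (∑ i, ∑ j, if W i j < 0 then |W i j| else 0) ≤ ∑ i, ∑ j, |W i j| := by
  have key : ∀ (v : Fin 2 → ℝ) (h : Fin m → ℝ),
      (∀ i, v i = 1 ∨ v i = -1) → (∀ j, h j = 1 ∨ h j = -1) →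
      ∑ i, ∑ j, W i j * v i * h j ≤ ∑ i, ∑ j, W i j := by
    intro v h hv hh
    have := hgauged v h hv hh
    simp only [rbmEnergy, ge_iff_le, mul_one] at this
    linarith
  -- Step 1: column sums are nonnegative
  have hpos : ∀ j : Fin m, 0 ≤ W 0 j + W 1 j := by
    intro j
    have hk := key (fun _ => 1) (fun k => if k = j then -1 else 1)
      (fun i => Or.inl rfl) (fun k => by by_cases hkj : k = j <;> simp [hkj])
    have heq : ∀ i : Fin 2,
        ∑ k, (W i k - W i k * 1 * (if k = j then (-1:ℝ) else 1)) = 2 * W i j := by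
      intro i
      have hpt : ∀ k, W i k - W i k * 1 * (if k = j then (-1:ℝ) else 1)
          = if k = j then 2 * W i k else 0 := by
        intro k; split_ifs <;> ring
      simp only [hpt]
      simp
    have h2 : (0:ℝ) ≤ ∑ i : Fin 2, ∑ k, (W i k - W i k * 1 * (if k = j then (-1:ℝ) else 1)) := by
      simp only [Finset.sum_sub_distrib]
      linarith
    rw [Finset.sum_congr rfl (fun i _ => heq i), Fin.sum_univ_two] at h2
    linarith
  -- Step 2
  have hdiff : ∑ j, |W 0 j - W 1 j| ≤ ∑ j, (W 0 j + W 1 j) := by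
    set h : Fin m → ℝ := fun j => if W 0 j - W 1 j < 0 then -1 else 1 with hhdef
    have hk := key ![1, -1] h (by intro i; fin_cases i <;> simp)
      (fun j => by
        simp only [hhdef]
        split_ifs
        · exact Or.inr rfl
        · exact Or.inl rfl)
    rw [Fin.sum_univ_two, Fin.sum_univ_two] at hk
    simp only [Matrix.cons_val_zero, Matrix.cons_val_one, Matrix.head_cons] at hk
    have habs : ∀ j, W 0 j * 1 * h j + W 1 j * (-1) * h j = |W 0 j - W 1 j| := by
      intro j
      by_cases hj : W 0 j - W 1 j < 0
      · rw [abs_of_neg hj]; simp only [hhdef, if_pos hj]; ring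
      · rw [abs_of_nonneg (not_lt.mp hj)]; simp only [hhdef, if_neg hj]; ring
    have hsum : ∑ j, |W 0 j - W 1 j| = ∑ j, (W 0 j * 1 * h j) + ∑ j, (W 1 j * (-1) * h j) := by
      rw [← Finset.sum_add_distrib]
      exact (Finset.sum_congr rfl (fun j _ => (habs j).symm))
    rw [Finset.sum_add_distrib]
    linarith [hsum, hk]
  -- Step 3: pointwise bound
  have hT : ∀ j, |W 0 j| + |W 1 j| ≤ (W 0 j + W 1 j) + |W 0 j - W 1 j| := by
    intro j
    have := hpos j
    rcases abs_cases (W 0 j) with ⟨e1, s1⟩ | ⟨e1, s1⟩ <;>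
      rcases abs_cases (W 1 j) with ⟨e2, s2⟩ | ⟨e2, s2⟩ <;>
      rcases abs_cases (W 0 j - W 1 j) with ⟨e3, s3⟩ | ⟨e3, s3⟩ <;>
      linarith
  -- Assemble
  have hsumT : ∑ j, (|W 0 j| + |W 1 j|) ≤ ∑ j, ((W 0 j + W 1 j) + |W 0 j - W 1 j|) :=
    Finset.sum_le_sum (fun j _ => hT j)
  rw [Finset.sum_add_distrib, Finset.sum_add_distrib] at hsumT
  have hiteq : ∀ i j, (if W i j < 0 then |W i j| else 0) = (|W i j| - W i j) / 2 := by
    intro i j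
    split_ifs with hx
    · rw [abs_of_neg hx]; ring
    · rw [abs_of_nonneg (not_lt.mp hx)]; ring
  simp only [hiteq]
  have hL : ∑ i : Fin 2, ∑ j, (|W i j| - W i j) / 2
      = ((∑ j, |W 0 j| + ∑ j, |W 1 j|) - (∑ j, W 0 j + ∑ j, W 1 j)) / 2 := by
    rw [Fin.sum_univ_two, ← Finset.sum_div, ← Finset.sum_div,
      Finset.sum_sub_distrib, Finset.sum_sub_distrib]
    ring
  have hR : ∑ i : Fin 2, ∑ j, |W i j| = ∑ j, |W 0 j| + ∑ j, |W 1 j| := Fin.sum_univ_two _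
  rw [hL, hR]
  have hsplit : ∑ j, (W 0 j + W 1 j) = ∑ j, W 0 j + ∑ j, W 1 j := Finset.sum_add_distrib
  linarith
end

section
/- Let α ∈ [0,1] and let A^{(1)}, …, A^{(N)} : [n]×[m] → ℝ be loop-atom matrices: each A^{(k)} is supported on a 2×2 block {i₁ᵏ, i₂ᵏ} × {j₁ᵏ, j₂ᵏ} (with i₁ᵏ ≠ i₂ᵏ and j₁ᵏ ≠ j₂ᵏ) where three of the four entries equal +1 and one entry equals −α, and all other entries are 0. Then the RBM instance W = Σ_{k=1}^N A^{(k)} has the all-ones configuration as a ground state of its energy E_W(v,h) = −Σ_{i,j} W_{ij} v_i h_j over {−1,1}^n × {−1,1}^m, and the ground-state energy equals −N(3−α). -/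
open Finset

/-- A loop atom with parameter `α`: a matrix supported on two distinct rows and two
distinct columns, where three of the four supported entries equal `+1` and one
equals `-α`. -/
def IsLoopAtom {n m : ℕ} (α : ℝ) (A : Fin n → Fin m → ℝ) : Prop :=
  ∃ (i₁ i₂ : Fin n) (j₁ j₂ : Fin m), i₁ ≠ i₂ ∧ j₁ ≠ j₂ ∧
    ((A i₁ j₁ = -α ∧ A i₁ j₂ = 1 ∧ A i₂ j₁ = 1 ∧ A i₂ j₂ = 1) ∨
     (A i₁ j₁ = 1 ∧ A i₁ j₂ = -α ∧ A i₂ j₁ = 1 ∧ A i₂ j₂ = 1) ∨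
     (A i₁ j₁ = 1 ∧ A i₁ j₂ = 1 ∧ A i₂ j₁ = -α ∧ A i₂ j₂ = 1) ∨
     (A i₁ j₁ = 1 ∧ A i₁ j₂ = 1 ∧ A i₂ j₁ = 1 ∧ A i₂ j₂ = -α)) ∧
    (∀ i j, ¬((i = i₁ ∨ i = i₂) ∧ (j = j₁ ∨ j = j₂)) → A i j = 0)


/-! Every loop atom is frustrated: the product of the four spin products `vᵢ hⱼ` around its
square is `1`, so the spins can satisfy either the three `+1` bonds or the `-α` bond, never all
four. Hence each atom contributes at least `-(3 - α)` to the energy, with equality at the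
all-ones state, and the energy of a sum of atoms is the sum of their energies. -/

theorem rbmEnergy_sum {ι : Type*} (s : Finset ι) {n m : ℕ} (A : ι → Fin n → Fin m → ℝ)
    (v : Fin n → ℝ) (h : Fin m → ℝ) :
    rbmEnergy (fun i j => ∑ k ∈ s, A k i j) v h = ∑ k ∈ s, rbmEnergy (A k) v h := by
  simp only [rbmEnergy, Finset.sum_mul, Finset.sum_neg_distrib, neg_inj]
  exact (Finset.sum_congr rfl fun _ _ => Finset.sum_comm).trans Finset.sum_comm

theorem sum_sum_mul_mul_eq_of_support {R ι κ : Type*} [CommSemiring R] [Fintype ι] [Fintype κ]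
    (A : ι → κ → R) {i₁ i₂ : ι} {j₁ j₂ : κ} (hi : i₁ ≠ i₂) (hj : j₁ ≠ j₂)
    (hA : ∀ i j, ¬((i = i₁ ∨ i = i₂) ∧ (j = j₁ ∨ j = j₂)) → A i j = 0) (v : ι → R) (h : κ → R) :
    ∑ i, ∑ j, A i j * v i * h j =
      A i₁ j₁ * v i₁ * h j₁ + A i₁ j₂ * v i₁ * h j₂ +
        (A i₂ j₁ * v i₂ * h j₁ + A i₂ j₂ * v i₂ * h j₂) := by
  have hrow : ∀ i, i = i₁ ∨ i = i₂ →
      ∑ j, A i j * v i * h j = A i j₁ * v i * h j₁ + A i j₂ * v i * h j₂ := fun i hi' =>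
    Fintype.sum_eq_add j₁ j₂ hj fun j hj' => by rw [hA i j (by tauto), zero_mul, zero_mul]
  rw [Fintype.sum_eq_add i₁ i₂ hi fun i hi' => Finset.sum_eq_zero fun j _ => by
      rw [hA i j (by tauto), zero_mul, zero_mul],
    hrow i₁ (.inl rfl), hrow i₂ (.inr rfl)]

/-- The four shapes in `IsLoopAtom` differ only by relabelling the two rows and the two columns,
so the `-α` entry can always be placed at `(i₁, j₁)`. -/
theorem IsLoopAtom.exists_neg_at_corner {n m : ℕ} {α : ℝ} {A : Fin n → Fin m → ℝ}
    (hA : IsLoopAtom α A) :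
    ∃ (i₁ i₂ : Fin n) (j₁ j₂ : Fin m), i₁ ≠ i₂ ∧ j₁ ≠ j₂ ∧
      (A i₁ j₁ = -α ∧ A i₁ j₂ = 1 ∧ A i₂ j₁ = 1 ∧ A i₂ j₂ = 1) ∧
      (∀ i j, ¬((i = i₁ ∨ i = i₂) ∧ (j = j₁ ∨ j = j₂)) → A i j = 0) := by
  obtain ⟨i₁, i₂, j₁, j₂, hi, hj, hshape, hzero⟩ := hA
  rcases hshape with ⟨a, b, c, d⟩ | ⟨a, b, c, d⟩ | ⟨a, b, c, d⟩ | ⟨a, b, c, d⟩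
  · exact ⟨i₁, i₂, j₁, j₂, hi, hj, ⟨a, b, c, d⟩, hzero⟩
  · exact ⟨i₁, i₂, j₂, j₁, hi, hj.symm, ⟨b, a, d, c⟩, fun i j h => hzero i j (by tauto)⟩
  · exact ⟨i₂, i₁, j₁, j₂, hi.symm, hj, ⟨c, d, a, b⟩, fun i j h => hzero i j (by tauto)⟩
  · exact ⟨i₂, i₁, j₂, j₁, hi.symm, hj.symm, ⟨d, c, b, a⟩, fun i j h => hzero i j (by tauto)⟩

/-- Grouping as `x₂ (y₁ + y₂) + x₁ (y₂ - α y₁)`: if `y₁ = y₂` this is at most `2 + (1 - α)`,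
otherwise at most `1 + α`. -/
theorem square_bond_sum_le_three_sub {α x₁ x₂ y₁ y₂ : ℝ} (hα : α ≤ 1)
    (hx₁ : x₁ = 1 ∨ x₁ = -1) (hx₂ : x₂ = 1 ∨ x₂ = -1)
    (hy₁ : y₁ = 1 ∨ y₁ = -1) (hy₂ : y₂ = 1 ∨ y₂ = -1) :
    -α * x₁ * y₁ + x₁ * y₂ + (x₂ * y₁ + x₂ * y₂) ≤ 3 - α := by
  rcases hx₁ with rfl | rfl <;> rcases hx₂ with rfl | rfl <;>
    rcases hy₁ with rfl | rfl <;> rcases hy₂ with rfl | rfl <;> linarith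

theorem IsLoopAtom.neg_le_rbmEnergy {n m : ℕ} {α : ℝ} (hα : α ≤ 1) {A : Fin n → Fin m → ℝ}
    (hA : IsLoopAtom α A) {v : Fin n → ℝ} {h : Fin m → ℝ}
    (hv : ∀ i, v i = 1 ∨ v i = -1) (hh : ∀ j, h j = 1 ∨ h j = -1) :
    -(3 - α) ≤ rbmEnergy A v h := by
  obtain ⟨i₁, i₂, j₁, j₂, hi, hj, ⟨a, b, c, d⟩, hzero⟩ := hA.exists_neg_at_corner
  rw [rbmEnergy, sum_sum_mul_mul_eq_of_support A hi hj hzero, a, b, c, d, neg_le_neg_iff]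
  simpa only [one_mul] using square_bond_sum_le_three_sub hα (hv i₁) (hv i₂) (hh j₁) (hh j₂)

theorem IsLoopAtom.rbmEnergy_one {n m : ℕ} {α : ℝ} {A : Fin n → Fin m → ℝ}
    (hA : IsLoopAtom α A) : rbmEnergy A (fun _ => 1) (fun _ => 1) = -(3 - α) := by
  obtain ⟨i₁, i₂, j₁, j₂, hi, hj, ⟨a, b, c, d⟩, hzero⟩ := hA.exists_neg_at_corner
  rw [rbmEnergy, sum_sum_mul_mul_eq_of_support A hi hj hzero, a, b, c, d]
  ring

theorem sum_of_loop_atoms_ground_state (n m N : ℕ) (α : ℝ)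
    (hα : α ∈ Set.Icc (0:ℝ) 1)
    (A : Fin N → Fin n → Fin m → ℝ) (hA : ∀ k, IsLoopAtom α (A k)) :
    (∀ (v : Fin n → ℝ) (h : Fin m → ℝ),
      (∀ i, v i = 1 ∨ v i = -1) → (∀ j, h j = 1 ∨ h j = -1) →
      rbmEnergy (fun i j => ∑ k, A k i j) v h ≥
        rbmEnergy (fun i j => ∑ k, A k i j) (fun _ => 1) (fun _ => 1)) ∧
    rbmEnergy (fun i j => ∑ k, A k i j) (fun _ => 1) (fun _ => 1) =
      -(N * (3 - α)) := by
  have hconst : ∑ _k : Fin N, -(3 - α) = -(N * (3 - α)) := by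
    rw [Finset.sum_const, Finset.card_univ, Fintype.card_fin, nsmul_eq_mul, mul_neg]
  have hground : rbmEnergy (fun i j => ∑ k, A k i j) (fun _ => 1) (fun _ => 1) =
      -(N * (3 - α)) := by
    rw [rbmEnergy_sum, ← hconst]
    exact Finset.sum_congr rfl fun k _ => (hA k).rbmEnergy_one
  refine ⟨fun v h hv hh => ?_, hground⟩
  rw [hground, ge_iff_le, rbmEnergy_sum, ← hconst]
  exact Finset.sum_le_sum fun k _ => (hA k).neg_le_rbmEnergy hα.2 hv hh
end

section
/- Let α ∈ [0,1] and consider the biased loop atom containing two fixed (ghost) spins: the energy over (v,h) ∈ {−1,1}² is E(v,h) = −(v + h − α·v·h), corresponding to bias weights +1 on each of the two free spins and coupling weight −α between them. Then E is minimized at (v,h) = (1,1) with minimum value −(2−α); its frustration index equals α/(2+α); and the maximum over α ∈ [0,1] of α/(2+α) is 1/3, attained at α = 1. In particular, biased loop atoms can contribute a frustration index up to 1/3, exceeding the bound 1/4 for unbiased loop atoms. -/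
open Set

theorem biased_loop_atom_frustration (α : ℝ) (hα : α ∈ Set.Icc (0:ℝ) 1) :
    -- the energy `E(v,h) = -(v + h - α·v·h)` is minimized at `(1,1)` with value `-(2-α)`
    (∀ v h : ℝ, (v = 1 ∨ v = -1) → (h = 1 ∨ h = -1) →
      -(v + h - α * v * h) ≥ -(2 - α)) ∧
    -((1:ℝ) + 1 - α * 1 * 1) = -(2 - α) ∧
    -- the frustration index (negative weight magnitudes over all weight magnitudes,
    -- for the weights `+1`, `+1`, `-α`) equals `α/(2+α)`
    ((if -α < 0 then |(-α)| else 0) / (|(1:ℝ)| + |(1:ℝ)| + |(-α)|) = α / (2 + α)) ∧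
    -- the maximum of `a ↦ a/(2+a)` over `a ∈ [0,1]` is `1/3`, attained at `a = 1`
    IsGreatest ((fun a : ℝ => a / (2 + a)) '' Set.Icc (0:ℝ) 1) (1/3) ∧
    (1:ℝ) / (2 + 1) = 1/3 ∧
    -- which exceeds the bound `1/4` for unbiased loop atoms
    (1:ℝ) / 4 < 1/3 := by
  obtain ⟨h0, h1⟩ := hα
  refine ⟨?_, by ring, ?_, ⟨⟨1, ⟨by norm_num, le_refl 1⟩, by norm_num⟩, ?_⟩, by norm_num, by norm_num⟩
  · rintro v h (rfl|rfl) (rfl|rfl) <;> nlinarith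
  · rcases eq_or_lt_of_le h0 with h0' | h0'
    · simp [← h0']
    · rw [if_pos (by linarith), abs_neg, abs_of_pos h0', abs_one]
      ring_nf
  · intro x hx
    obtain ⟨a, ⟨ha0, ha1⟩, rfl⟩ := hx
    simp only
    rw [div_le_div_iff₀ (by linarith) (by norm_num)]
    linarith
end
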